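/- arXiv:2108.09865 — 7 statements merged into one kernel-verified Lean document; each statement's English description precedes it below -/
import Mathlib

section
/- Let P be a row-stochastic n×n matrix and α ∈ (0,1]^n with every α_i > 0. Then the matrix M = I - Diag(1 - α) P is invertible. -/
open Matrix

theorem stmt0 {n : ℕ} (P : Matrix (Fin n) (Fin n) ℝ) (α : Fin n → ℝ)
    (hP0 : ∀ i j, 0 ≤ P i j) (hP1 : ∀ i, ∑ j, P i j = 1)
    (hα : ∀ i, 0 < α i ∧ α i ≤ 1) :
    IsUnit ((1 : Matrix (Fin n) (Fin n) ℝ) - diagonal (fun i => 1 - α i) * P) := by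
  rw [Matrix.isUnit_iff_isUnit_det, isUnit_iff_ne_zero]
  apply det_ne_zero_of_sum_row_lt_diag
  intro k
  have hc0 : (0:ℝ) ≤ 1 - α k := by linarith [(hα k).2]
  have hc1 : 1 - α k < 1 := by linarith [(hα k).1]
  have hM : ∀ j, ((1 : Matrix (Fin n) (Fin n) ℝ) - diagonal (fun i => 1 - α i) * P) k j
      = (if k = j then (1:ℝ) else 0) - (1 - α k) * P k j := by
    intro j
    simp [Matrix.sub_apply, Matrix.mul_apply, Matrix.one_apply, Matrix.diagonal_apply,
      Finset.mul_sum]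
  have hPkk : P k k ≤ 1 := by
    have := Finset.single_le_sum (f := fun j => P k j) (fun j _ => hP0 k j)
      (Finset.mem_univ k)
    linarith [hP1 k]
  have hsum : ∑ j ∈ Finset.univ.erase k, P k j = 1 - P k k := by
    have := Finset.add_sum_erase Finset.univ (fun j => P k j) (Finset.mem_univ k)
    linarith [hP1 k]
  calc ∑ j ∈ Finset.univ.erase k,
        ‖((1 : Matrix (Fin n) (Fin n) ℝ) - diagonal (fun i => 1 - α i) * P) k j‖
      = ∑ j ∈ Finset.univ.erase k, (1 - α k) * P k j := by
        apply Finset.sum_congr rfl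
        intro j hj
        rw [hM j, if_neg (by exact fun h => (Finset.mem_erase.mp hj).1 h.symm)]
        rw [Real.norm_eq_abs, abs_of_nonpos (by nlinarith [hP0 k j])]
        ring
    _ = (1 - α k) * (1 - P k k) := by rw [← Finset.mul_sum, hsum]
    _ < 1 - (1 - α k) * P k k := by nlinarith
    _ = ‖((1 : Matrix (Fin n) (Fin n) ℝ) - diagonal (fun i => 1 - α i) * P) k k‖ := by
        rw [hM k, if_pos rfl, Real.norm_eq_abs, abs_of_nonneg (by nlinarith [hP0 k k])]
end

section
/- Let P be row-stochastic, α ∈ (0,1]^n, s ∈ [0,1]^n, and z^(∞) = (I - Diag(1-α)P)^{-1} Diag(α) s. Then every entry of z^(∞) lies in [0,1]. -/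
open Matrix

theorem stmt2 {n : ℕ} (P : Matrix (Fin n) (Fin n) ℝ) (α s : Fin n → ℝ)
    (hP0 : ∀ i j, 0 ≤ P i j) (hP1 : ∀ i, ∑ j, P i j = 1)
    (hα : ∀ i, 0 < α i ∧ α i ≤ 1) (hs : ∀ i, 0 ≤ s i ∧ s i ≤ 1) :
    ∀ i, 0 ≤ (((1 : Matrix (Fin n) (Fin n) ℝ) - diagonal (fun i => 1 - α i) * P)⁻¹ *ᵥ
        (diagonal α *ᵥ s)) i ∧
      (((1 : Matrix (Fin n) (Fin n) ℝ) - diagonal (fun i => 1 - α i) * P)⁻¹ *ᵥ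
        (diagonal α *ᵥ s)) i ≤ 1 := by
  rcases Nat.eq_zero_or_pos n with hn | hn
  · subst hn; exact fun i => i.elim0
  set A : Matrix (Fin n) (Fin n) ℝ := diagonal (fun i => 1 - α i) * P with hA
  set M : Matrix (Fin n) (Fin n) ℝ := 1 - A with hM
  -- key: if M *ᵥ x = 0 then x = 0
  have hker : ∀ x : Fin n → ℝ, M *ᵥ x = 0 → x = 0 := by
    intro x hx
    have hx' : ∀ i, x i = (1 - α i) * ∑ j, P i j * x j := by
      intro i
      have := congrFun hx i
      simp only [hM, sub_mulVec, one_mulVec, Pi.sub_apply, Pi.zero_apply, sub_eq_zero] at this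
      rw [this]
      simp [hA, mulVec, dotProduct, diagonal_mul, Finset.mul_sum, mul_assoc]
    -- take index maximizing |x|
    obtain ⟨i, -, hi⟩ := Finset.exists_max_image Finset.univ (fun i => |x i|)
      ⟨⟨0, hn⟩, Finset.mem_univ _⟩
    have hbound : |x i| ≤ (1 - α i) * |x i| := by
      calc |x i| = |(1 - α i) * ∑ j, P i j * x j| := by rw [hx' i]
        _ = (1 - α i) * |∑ j, P i j * x j| := by
            rw [abs_mul, abs_of_nonneg (by linarith [(hα i).2])]
        _ ≤ (1 - α i) * ∑ j, |P i j * x j| := by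
            apply mul_le_mul_of_nonneg_left (Finset.abs_sum_le_sum_abs _ _)
            linarith [(hα i).2]
        _ ≤ (1 - α i) * ∑ j, P i j * |x i| := by
            apply mul_le_mul_of_nonneg_left _ (by linarith [(hα i).2])
            apply Finset.sum_le_sum
            intro j _
            rw [abs_mul, abs_of_nonneg (hP0 i j)]
            exact mul_le_mul_of_nonneg_left (hi j (Finset.mem_univ _)) (hP0 i j)
        _ = (1 - α i) * |x i| := by rw [← Finset.sum_mul, hP1 i, one_mul]
    have hxi : |x i| = 0 := by nlinarith [(hα i).1, abs_nonneg (x i)]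
    funext j
    have hj := hi j (Finset.mem_univ _)
    have : |x j| = 0 := le_antisymm (hxi ▸ hj) (abs_nonneg _)
    simpa using abs_eq_zero.mp this
  have hMunit : IsUnit M := by
    rw [← Matrix.mulVec_injective_iff_isUnit]
    intro x y hxy
    have : M *ᵥ (x - y) = 0 := by rw [Matrix.mulVec_sub, hxy, sub_self]
    have := hker _ this
    exact sub_eq_zero.mp this
  have hdet : IsUnit M.det := (Matrix.isUnit_iff_isUnit_det M).mp hMunit
  set z : Fin n → ℝ := M⁻¹ *ᵥ (diagonal α *ᵥ s) with hz
  have hMz : M *ᵥ z = diagonal α *ᵥ s := by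
    rw [hz, mulVec_mulVec, Matrix.mul_nonsing_inv M hdet, one_mulVec]
  have heq : ∀ i, z i = (1 - α i) * (∑ j, P i j * z j) + α i * s i := by
    intro i
    have := congrFun hMz i
    simp only [hM, sub_mulVec, one_mulVec, Pi.sub_apply, mulVec_diagonal] at this
    have hAz : (A *ᵥ z) i = (1 - α i) * ∑ j, P i j * z j := by
      simp [hA, mulVec, dotProduct, diagonal_mul, Finset.mul_sum, mul_assoc]
    rw [hAz] at this
    linarith [this]
  -- upper bound
  have hub : ∀ i, z i ≤ 1 := by
    obtain ⟨i, -, hi⟩ := Finset.exists_max_image Finset.univ z ⟨⟨0, hn⟩, Finset.mem_univ _⟩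
    have key : z i ≤ 1 := by
      have h1 : ∑ j, P i j * z j ≤ z i := by
        calc ∑ j, P i j * z j ≤ ∑ j, P i j * z i :=
              Finset.sum_le_sum fun j _ =>
                mul_le_mul_of_nonneg_left (hi j (Finset.mem_univ _)) (hP0 i j)
          _ = z i := by rw [← Finset.sum_mul, hP1 i, one_mul]
      have h2 := heq i
      nlinarith [(hα i).1, (hα i).2, (hs i).2]
    exact fun j => le_trans (hi j (Finset.mem_univ _)) key
  have hlb : ∀ i, 0 ≤ z i := by
    obtain ⟨i, -, hi⟩ := Finset.exists_min_image Finset.univ z ⟨⟨0, hn⟩, Finset.mem_univ _⟩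
    have key : 0 ≤ z i := by
      have h1 : z i ≤ ∑ j, P i j * z j := by
        calc z i = ∑ j, P i j * z i := by rw [← Finset.sum_mul, hP1 i, one_mul]
          _ ≤ ∑ j, P i j * z j :=
              Finset.sum_le_sum fun j _ =>
                mul_le_mul_of_nonneg_left (hi j (Finset.mem_univ _)) (hP0 i j)
      have h2 := heq i
      nlinarith [(hα i).1, (hα i).2, (hs i).1]
    exact fun j => le_trans key (hi j (Finset.mem_univ _))
  exact fun i => ⟨hlb i, hub i⟩
end

section
/- Define f(α) = 1^T (I - Diag(1-α)P)^{-1} Diag(α) s for α in the open set where all α_i ∈ (0,1]. With M = I - Diag(1-α)P, the gradient of f satisfies ∇f(α) = Diag(M^{-T} 1)(s - P M^{-1} Diag(α) s), i.e., ∂f/∂α_i = v_i (s_i - p_i^T M^{-1} Diag(α) s), where v = M^{-T} 1 and p_i^T is the i-th row of P. -/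
/-! Write `M(t) = I - Diag(1 - α[i ↦ t]) P` and `b(t) = Diag(α[i ↦ t]) s`, both affine in `t` with
`M' = Diag(eᵢ) P` and `b' = sᵢ eᵢ`. Differentiating `M⁻¹ b` gives `M⁻¹ (b' - M' M⁻¹ b)`, and
`M' x = (P x)ᵢ eᵢ`, so the derivative is `M⁻¹ eᵢ (sᵢ - (P M⁻¹ b)ᵢ)`; summing its coordinates turns
`1ᵀ M⁻¹ eᵢ` into `(M⁻ᵀ 1)ᵢ`. `M` is invertible because in the `ℓ∞` operator norm
`‖Diag(1 - α) P‖ = maxₖ (1 - αₖ) < 1`. -/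

open Matrix

section MatrixCalculus

attribute [local instance] Matrix.linftyOpNormedAddCommGroup Matrix.linftyOpNormedSpace
  Matrix.linftyOpNormedRing Matrix.linftyOpNormedAlgebra

variable {𝕜 m n : Type*} [RCLike 𝕜] [Fintype m] [Fintype n]

theorem HasDerivAt.matrix_apply {A : 𝕜 → Matrix m n 𝕜} {A' : Matrix m n 𝕜} {t : 𝕜}
    (hA : HasDerivAt A A' t) (i : m) (j : n) : HasDerivAt (fun t => A t i j) (A' i j) t :=
  (LinearMap.toContinuousLinearMap (entryLinearMap 𝕜 𝕜 i j)).hasFDerivAt.comp_hasDerivAt t hA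

theorem HasDerivAt.mulVec {A : 𝕜 → Matrix m n 𝕜} {A' : Matrix m n 𝕜} {b : 𝕜 → n → 𝕜}
    {b' : n → 𝕜} {t : 𝕜} (hA : HasDerivAt A A' t) (hb : HasDerivAt b b' t) :
    HasDerivAt (fun t => A t *ᵥ b t) (A' *ᵥ b t + A t *ᵥ b') t := by
  refine hasDerivAt_pi.2 fun i => ?_
  have h := HasDerivAt.fun_sum (u := Finset.univ) fun j _ =>
    (hA.matrix_apply i j).mul (hasDerivAt_pi.1 hb j)
  rw [Finset.sum_add_distrib] at h
  exact h

variable [DecidableEq m]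

theorem Matrix.isUnit_one_sub_of_sum_norm_lt_one {A : Matrix m m 𝕜}
    (hA : ∀ i, ∑ j, ‖A i j‖ < 1) : IsUnit (1 - A) := by
  refine isUnit_one_sub_of_norm_lt_one ?_
  rw [linfty_opNorm_def, NNReal.coe_lt_one, Finset.sup_lt_iff zero_lt_one]
  intro i _
  rw [← NNReal.coe_lt_one]
  simpa using hA i

theorem HasDerivAt.matrix_diagonal {d : 𝕜 → m → 𝕜} {d' : m → 𝕜} {t : 𝕜}
    (hd : HasDerivAt d d' t) : HasDerivAt (fun t => diagonal (d t)) (diagonal d') t :=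
  (LinearMap.toContinuousLinearMap (diagonalLinearMap m 𝕜 𝕜)).hasFDerivAt.comp_hasDerivAt t hd

theorem HasDerivAt.matrix_inv {A : 𝕜 → Matrix m m 𝕜} {A' : Matrix m m 𝕜} {t : 𝕜}
    (hA : HasDerivAt A A' t) (hAt : IsUnit (A t)) :
    HasDerivAt (fun t => (A t)⁻¹) (-((A t)⁻¹ * A' * (A t)⁻¹)) t := by
  obtain ⟨u, hu⟩ := hAt
  simp only [nonsing_inv_eq_ringInverse, ← hu, Ring.inverse_unit]
  have hinv := hasFDerivAt_ringInverse (𝕜 := 𝕜) u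
  rw [hu] at hinv
  have h := hinv.comp_hasDerivAt t hA
  simp only [_root_.neg_apply, ContinuousLinearMap.mulLeftRight_apply] at h
  exact h

theorem HasDerivAt.inv_mulVec {A : 𝕜 → Matrix m m 𝕜} {A' : Matrix m m 𝕜} {b : 𝕜 → m → 𝕜}
    {b' : m → 𝕜} {t : 𝕜} (hA : HasDerivAt A A' t) (hb : HasDerivAt b b' t)
    (hAt : IsUnit (A t)) :
    HasDerivAt (fun t => (A t)⁻¹ *ᵥ b t) ((A t)⁻¹ *ᵥ (b' - A' *ᵥ ((A t)⁻¹ *ᵥ b t))) t := by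
  convert (hA.matrix_inv hAt).mulVec hb using 1
  simp only [mulVec_sub, neg_mulVec, mulVec_mulVec, Matrix.mul_assoc]
  abel

theorem hasDerivAt_one_sub_diagonal_update_mul (P : Matrix m m 𝕜) (d : m → 𝕜) (i : m) (t : 𝕜) :
    HasDerivAt (fun t => 1 - diagonal (fun j => 1 - Function.update d i t j) * P)
      (diagonal (Pi.single i 1) * P) t := by
  have h := (((hasDerivAt_update d i t).const_sub 1).matrix_diagonal.mul_const P).const_sub 1
  have hd : -(diagonal (-Pi.single i 1) * P) = diagonal (Pi.single i 1) * P := by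
    ext j k
    simp [diagonal_mul]
  rw [hd] at h
  exact h

end MatrixCalculus

theorem Matrix.isUnit_one_sub_diagonal_mul {m : Type*} [Fintype m] [DecidableEq m]
    {P : Matrix m m ℝ} {d : m → ℝ} (hP0 : ∀ i j, 0 ≤ P i j) (hP1 : ∀ i, ∑ j, P i j ≤ 1)
    (hd0 : ∀ i, 0 ≤ d i) (hd1 : ∀ i, d i < 1) : IsUnit (1 - diagonal d * P) := by
  refine isUnit_one_sub_of_sum_norm_lt_one fun i => ?_
  calc ∑ j, ‖(diagonal d * P) i j‖ = d i * ∑ j, P i j := by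
        simp [diagonal_mul, abs_of_nonneg, hd0, hP0, Finset.mul_sum]
    _ ≤ d i := mul_le_of_le_one_right (hd0 i) (hP1 i)
    _ < 1 := hd1 i

section

variable {R m : Type*} [Semiring R] [Fintype m] [DecidableEq m]

theorem Matrix.diagonal_single_mul_mulVec (P : Matrix m m R) (i : m) (y : m → R) :
    (diagonal (Pi.single i 1) * P) *ᵥ y = Pi.single i ((P *ᵥ y) i) := by
  ext j
  rw [← mulVec_mulVec, mulVec_diagonal]
  by_cases hj : j = i
  · subst hj; simp
  · simp [hj]

theorem Matrix.sum_mulVec_single (N : Matrix m m R) (i : m) (c : R) :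
    ∑ j, (N *ᵥ Pi.single i c) j = (Nᵀ *ᵥ fun _ => 1) i * c := by
  simp only [mulVec, dotProduct_single]
  simp only [dotProduct, transpose_apply, mul_one, Finset.sum_mul]

end

theorem stmt3_general {n : ℕ} (P : Matrix (Fin n) (Fin n) ℝ) (α s : Fin n → ℝ)
    (hP0 : ∀ i j, 0 ≤ P i j) (hP1 : ∀ i, ∑ j, P i j = 1)
    (hα : ∀ i, 0 < α i ∧ α i ≤ 1) :
    ∀ i : Fin n,
      HasDerivAt
        (fun t : ℝ => ∑ j,
          (((1 : Matrix (Fin n) (Fin n) ℝ)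
              - diagonal (fun j => 1 - Function.update α i t j) * P)⁻¹ *ᵥ
            (fun j => Function.update α i t j * s j)) j)
        ((((1 : Matrix (Fin n) (Fin n) ℝ) - diagonal (fun j => 1 - α j) * P)⁻¹ᵀ *ᵥ
            (fun _ => (1 : ℝ))) i *
          (s i - (P *ᵥ (((1 : Matrix (Fin n) (Fin n) ℝ)
              - diagonal (fun j => 1 - α j) * P)⁻¹ *ᵥ fun j => α j * s j)) i))
        (α i) := by
  intro i
  have hM : IsUnit ((1 : Matrix (Fin n) (Fin n) ℝ) - diagonal (fun j => 1 - α j) * P) :=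
    isUnit_one_sub_diagonal_mul hP0 (fun k => (hP1 k).le) (fun k => by linarith [(hα k).2])
      (fun k => by linarith [(hα k).1])
  have hb : HasDerivAt (fun t j => Function.update α i t j * s j) (Pi.single i (s i)) (α i) := by
    have h := (hasDerivAt_update α i (α i)).mul_const s
    rw [← Pi.single_mul_left, one_mul] at h
    exact h
  have hx := (hasDerivAt_one_sub_diagonal_update_mul P α i (α i)).inv_mulVec hb
    (by simpa using hM)
  have hsum := HasDerivAt.fun_sum (u := Finset.univ) fun j _ => hasDerivAt_pi.1 hx j
  simp only [Function.update_eq_self] at hsum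
  rwa [diagonal_single_mul_mulVec, ← Pi.single_sub, sum_mulVec_single] at hsum

/-- Partial derivatives of `f(α) = 1ᵀ (I - Diag(1-α)P)⁻¹ Diag(α) s`:
`∂f/∂α_i = v_i (s_i - p_iᵀ M⁻¹ Diag(α) s)` where `v = M⁻ᵀ 1`. -/
theorem stmt3 {n : ℕ} (P : Matrix (Fin n) (Fin n) ℝ) (α s : Fin n → ℝ)
    (hP0 : ∀ i j, 0 ≤ P i j) (hP1 : ∀ i, ∑ j, P i j = 1)
    (hα : ∀ i, 0 < α i ∧ α i ≤ 1) (hs : ∀ i, 0 ≤ s i ∧ s i ≤ 1) :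
    ∀ i : Fin n,
      HasDerivAt
        (fun t : ℝ => ∑ j,
          (((1 : Matrix (Fin n) (Fin n) ℝ)
              - diagonal (fun j => 1 - Function.update α i t j) * P)⁻¹ *ᵥ
            (fun j => Function.update α i t j * s j)) j)
        ((((1 : Matrix (Fin n) (Fin n) ℝ) - diagonal (fun j => 1 - α j) * P)⁻¹ᵀ *ᵥ
            (fun _ => (1 : ℝ))) i *
          (s i - (P *ᵥ (((1 : Matrix (Fin n) (Fin n) ℝ)
              - diagonal (fun j => 1 - α j) * P)⁻¹ *ᵥ fun j => α j * s j)) i))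
        (α i) :=
  stmt3_general P α s hP0 hP1 hα
end

section
/- Let C ⊆ ℝ^n be nonempty, closed, and convex, and let f be differentiable with L-Lipschitz gradient on C. For x ∈ C and η ≤ 1/L, let x⁺ = proj_C(x - η ∇f(x)). Then f(x⁺) ≤ f(x) - (1/(2η))‖x⁺ - x‖². -/
/-!
The descent lemma `f y ≤ f x + ⟪∇f x, y - x⟫ + L/2 ‖y - x‖²` holds for `x, y ∈ C` because the
segment `[x, y]` stays in `C`, where `∇f` is `L`-Lipschitz. The variational inequality of the
projection, tested at `x ∈ C`, gives `⟪∇f x, x⁺ - x⟫ ≤ -‖x⁺ - x‖² / η`, and `L ≤ 1/η` bounds the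
quadratic term of the descent lemma at `y = x⁺` by `‖x⁺ - x‖² / (2η)`.
-/

open scoped RealInnerProductSpace

open Set AffineMap

section

variable {E : Type*} [NormedAddCommGroup E] [InnerProductSpace ℝ E]

theorem Convex.le_add_inner_add_sq_of_hasGradientAt [CompleteSpace E] {f : E → ℝ} {f' : E → E}
    {C : Set E} {L : ℝ} (hC : Convex ℝ C) (hf : ∀ x ∈ C, HasGradientAt f (f' x) x)
    (hlip : ∀ x ∈ C, ∀ y ∈ C, ‖f' x - f' y‖ ≤ L * ‖x - y‖) {x y : E} (hx : x ∈ C)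
    (hy : y ∈ C) : f y ≤ f x + ⟪f' x, y - x⟫ + L / 2 * ‖y - x‖ ^ 2 := by
  set v := y - x
  -- The gap between `f` and its quadratic upper model along the segment is antitone on `[0, 1]`.
  set φ : ℝ → ℝ := fun t ↦ f (lineMap x y t) - t * ⟪f' x, v⟫ - L / 2 * t ^ 2 * ‖v‖ ^ 2
  have hmem : ∀ t ∈ Icc (0 : ℝ) 1, lineMap x y t ∈ C := fun t ht ↦ hC.lineMap_mem hx hy ht
  have hφ : ∀ t ∈ Icc (0 : ℝ) 1,
      HasDerivAt φ (⟪f' (lineMap x y t), v⟫ - ⟪f' x, v⟫ - L * t * ‖v‖ ^ 2) t := by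
    intro t ht
    have hft := (hf _ (hmem t ht)).hasFDerivAt.comp_hasDerivAt t hasDerivAt_lineMap
    refine ((hft.sub ((hasDerivAt_id t).mul_const ⟪f' x, v⟫)).sub
      (((hasDerivAt_pow 2 t).const_mul (L / 2)).mul_const (‖v‖ ^ 2))).congr_deriv ?_
    simp only [InnerProductSpace.toDual_apply_apply, v]
    ring
  have hφ' : ∀ t ∈ Icc (0 : ℝ) 1,
      ⟪f' (lineMap x y t), v⟫ - ⟪f' x, v⟫ ≤ L * t * ‖v‖ ^ 2 := by
    intro t ht
    have hdist : ‖lineMap x y t - x‖ = t * ‖v‖ := by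
      rw [← vsub_eq_sub, lineMap_vsub_left, norm_smul, Real.norm_of_nonneg ht.1, vsub_eq_sub]
    calc ⟪f' (lineMap x y t), v⟫ - ⟪f' x, v⟫ = ⟪f' (lineMap x y t) - f' x, v⟫ :=
          (inner_sub_left _ _ _).symm
      _ ≤ ‖f' (lineMap x y t) - f' x‖ * ‖v‖ := real_inner_le_norm _ _
      _ ≤ L * (t * ‖v‖) * ‖v‖ := by
          rw [← hdist]; gcongr; exact hlip _ (hmem t ht) _ hx
      _ = L * t * ‖v‖ ^ 2 := by ring
  have hanti : AntitoneOn φ (Icc 0 1) :=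
    antitoneOn_of_hasDerivWithinAt_nonpos (convex_Icc 0 1)
      (fun t ht ↦ (hφ t ht).continuousAt.continuousWithinAt)
      (fun t ht ↦ (hφ t (interior_subset ht)).hasDerivWithinAt)
      (fun t ht ↦ sub_nonpos.2 (hφ' t (interior_subset ht)))
  have := hanti (left_mem_Icc.2 zero_le_one) (right_mem_Icc.2 zero_le_one) zero_le_one
  simp only [φ, lineMap_apply_zero, lineMap_apply_one] at this
  linarith

theorem real_inner_sub_le_zero_of_forall_norm_sub_le {K : Set E} (hK : Convex ℝ K) {u v : E}
    (hv : v ∈ K) (hmin : ∀ w ∈ K, ‖u - v‖ ≤ ‖u - w‖) : ∀ w ∈ K, ⟪u - v, w - v⟫ ≤ 0 := by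
  have : Nonempty K := ⟨⟨v, hv⟩⟩
  refine (norm_eq_iInf_iff_real_inner_le_zero hK hv).1 (le_antisymm ?_ ?_)
  · exact le_ciInf fun w ↦ hmin w w.2
  · exact ciInf_le ⟨0, by rintro _ ⟨w, rfl⟩; exact norm_nonneg _⟩ (⟨v, hv⟩ : K)

theorem real_inner_sub_le_neg_norm_sq_div_of_forall_norm_sub_le {K : Set E} (hK : Convex ℝ K)
    {x g xp : E} {η : ℝ} (hη : 0 < η) (hx : x ∈ K) (hxp : xp ∈ K)
    (hmin : ∀ z ∈ K, ‖x - η • g - xp‖ ≤ ‖x - η • g - z‖) :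
    ⟪g, xp - x⟫ ≤ -‖xp - x‖ ^ 2 / η := by
  have hproj := real_inner_sub_le_zero_of_forall_norm_sub_le hK hxp hmin x hx
  have hexpand : ⟪x - η • g - xp, x - xp⟫ = ‖xp - x‖ ^ 2 + η * ⟪g, xp - x⟫ := by
    rw [show x - η • g - xp = -(xp - x) - η • g by abel, show x - xp = -(xp - x) by abel,
      inner_sub_left, inner_neg_neg, real_inner_self_eq_norm_sq, real_inner_smul_left,
      inner_neg_right]
    ring
  rw [le_div_iff₀ hη]
  linarith

end

theorem stmt5_general {n : ℕ} (f : EuclideanSpace ℝ (Fin n) → ℝ)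
    (f' : EuclideanSpace ℝ (Fin n) → EuclideanSpace ℝ (Fin n))
    (C : Set (EuclideanSpace ℝ (Fin n))) (L : ℝ)
    (hCcv : Convex ℝ C)
    (hdiff : ∀ x ∈ C, HasGradientAt f (f' x) x)
    (hlip : ∀ x ∈ C, ∀ y ∈ C, ‖f' x - f' y‖ ≤ L * ‖x - y‖)
    (hL : 0 < L) (x : EuclideanSpace ℝ (Fin n)) (hx : x ∈ C)
    (η : ℝ) (hη : 0 < η) (hηL : η ≤ 1 / L)
    (xp : EuclideanSpace ℝ (Fin n)) (hxpC : xp ∈ C)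
    (hxp : ∀ z ∈ C, ‖x - η • f' x - xp‖ ≤ ‖x - η • f' x - z‖) :
    f xp ≤ f x - 1 / (2 * η) * ‖xp - x‖ ^ 2 := by
  have hinner := real_inner_sub_le_neg_norm_sq_div_of_forall_norm_sub_le hCcv hη hx hxpC hxp
  have hLη : L ≤ 1 / η := (le_one_div hη hL).1 hηL
  calc f xp ≤ f x + ⟪f' x, xp - x⟫ + L / 2 * ‖xp - x‖ ^ 2 :=
        hCcv.le_add_inner_add_sq_of_hasGradientAt hdiff hlip hx hxpC
    _ ≤ f x + -‖xp - x‖ ^ 2 / η + 1 / η / 2 * ‖xp - x‖ ^ 2 := by gcongr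
    _ = f x - 1 / (2 * η) * ‖xp - x‖ ^ 2 := by field_simp; ring

/-- Sufficient decrease of a projected gradient step with stepsize `η ≤ 1/L`. -/
theorem stmt5 {n : ℕ} (f : EuclideanSpace ℝ (Fin n) → ℝ)
    (f' : EuclideanSpace ℝ (Fin n) → EuclideanSpace ℝ (Fin n))
    (C : Set (EuclideanSpace ℝ (Fin n))) (L : ℝ)
    (hCne : C.Nonempty) (hCcl : IsClosed C) (hCcv : Convex ℝ C)
    (hdiff : ∀ x ∈ C, HasGradientAt f (f' x) x)
    (hlip : ∀ x ∈ C, ∀ y ∈ C, ‖f' x - f' y‖ ≤ L * ‖x - y‖)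
    (hL : 0 < L) (x : EuclideanSpace ℝ (Fin n)) (hx : x ∈ C)
    (η : ℝ) (hη : 0 < η) (hηL : η ≤ 1 / L)
    (xp : EuclideanSpace ℝ (Fin n)) (hxpC : xp ∈ C)
    (hxp : ∀ z ∈ C, ‖x - η • f' x - xp‖ ≤ ‖x - η • f' x - z‖) :
    f xp ≤ f x - 1 / (2 * η) * ‖xp - x‖ ^ 2 :=
  stmt5_general f f' C L hCcv hdiff hlip hL x hx η hη hηL xp hxpC hxp
end

section
/- Let C be nonempty closed convex, f differentiable, x ∈ C. The norm of the gradient mapping ‖G_η(x)‖ is nonincreasing in η > 0, i.e., for 0 < η₁ ≤ η₂, ‖G_{η₂}(x)‖ ≤ ‖G_{η₁}(x)‖. -/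
open scoped RealInnerProductSpace

/-- Variational inequality for a point minimizing distance over a convex set. -/
lemma proj_vi {n : ℕ} {C : Set (EuclideanSpace ℝ (Fin n))} (hC : Convex ℝ C)
    {y p : EuclideanSpace ℝ (Fin n)} (hp : p ∈ C)
    (hmin : ∀ z ∈ C, ‖y - p‖ ≤ ‖y - z‖) :
    ∀ z ∈ C, ⟪y - p, z - p⟫ ≤ 0 := by
  have : Nonempty ↑C := ⟨⟨p, hp⟩⟩
  have hbdd : BddBelow (Set.range fun w : C => ‖y - (w : EuclideanSpace ℝ (Fin n))‖) :=
    ⟨0, by rintro _ ⟨w, rfl⟩; exact norm_nonneg _⟩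
  have heq : ‖y - p‖ = ⨅ w : C, ‖y - (w : EuclideanSpace ℝ (Fin n))‖ :=
    le_antisymm (le_ciInf fun w => hmin w w.2) (ciInf_le hbdd ⟨p, hp⟩)
  exact (norm_eq_iInf_iff_real_inner_le_zero hC hp).mp heq

/-- Expansion of an inner product used below. -/
lemma expand_inner {n : ℕ} (a b c : EuclideanSpace ℝ (Fin n)) (r : ℝ) :
    ⟪a - r • c, a - b⟫ = ⟪a, a⟫ - ⟪a, b⟫ - r * ⟪c, a⟫ + r * ⟪c, b⟫ := by
  rw [inner_sub_left, inner_sub_right, inner_sub_right, real_inner_smul_left,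
    real_inner_smul_left]
  ring

set_option maxHeartbeats 1000000 in
/-- The norm of the gradient mapping `‖G_η(x)‖` is nonincreasing in `η > 0`. -/
theorem stmt7 {n : ℕ} (f : EuclideanSpace ℝ (Fin n) → ℝ)
    (f' : EuclideanSpace ℝ (Fin n) → EuclideanSpace ℝ (Fin n))
    (C : Set (EuclideanSpace ℝ (Fin n)))
    (hCne : C.Nonempty) (hCcl : IsClosed C) (hCcv : Convex ℝ C)
    (hdiff : ∀ x, HasGradientAt f (f' x) x)
    (x : EuclideanSpace ℝ (Fin n)) (hx : x ∈ C)
    (η₁ η₂ : ℝ) (hη₁ : 0 < η₁) (hη₁₂ : η₁ ≤ η₂)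
    (p₁ p₂ : EuclideanSpace ℝ (Fin n)) (hp₁C : p₁ ∈ C) (hp₂C : p₂ ∈ C)
    (hp₁ : ∀ z ∈ C, ‖x - η₁ • f' x - p₁‖ ≤ ‖x - η₁ • f' x - z‖)
    (hp₂ : ∀ z ∈ C, ‖x - η₂ • f' x - p₂‖ ≤ ‖x - η₂ • f' x - z‖) :
    ‖(1 / η₂) • (x - p₂)‖ ≤ ‖(1 / η₁) • (x - p₁)‖ := by
  have hη₂ : 0 < η₂ := lt_of_lt_of_le hη₁ hη₁₂
  obtain ⟨u, hu⟩ : ∃ u, u = x - p₁ := ⟨_, rfl⟩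
  obtain ⟨v, hv⟩ : ∃ v, v = x - p₂ := ⟨_, rfl⟩
  obtain ⟨g, hg⟩ : ∃ g, g = f' x := ⟨_, rfl⟩
  have h1 := proj_vi hCcv hp₁C hp₁ p₂ hp₂C
  have h2 := proj_vi hCcv hp₂C hp₂ p₁ hp₁C
  have e1 : x - η₁ • f' x - p₁ = u - η₁ • g := by rw [hu, hg]; abel
  have e2 : p₂ - p₁ = u - v := by rw [hu, hv]; abel
  have e3 : x - η₂ • f' x - p₂ = v - η₂ • g := by rw [hv, hg]; abel
  have e4 : p₁ - p₂ = v - u := by rw [hu, hv]; abel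
  rw [e1, e2, expand_inner u v g η₁] at h1
  rw [e3, e4, expand_inner v u g η₂] at h2
  have huu : ⟪u, u⟫ = ‖u‖ ^ 2 := real_inner_self_eq_norm_sq u
  have hvv : ⟪v, v⟫ = ‖v‖ ^ 2 := real_inner_self_eq_norm_sq v
  have hcomm : ⟪v, u⟫ = ⟪u, v⟫ := real_inner_comm u v
  have hcs : ⟪u, v⟫ ≤ ‖u‖ * ‖v‖ := real_inner_le_norm u v
  have key : η₂ * ‖u‖ ^ 2 + η₁ * ‖v‖ ^ 2 ≤ (η₁ + η₂) * (‖u‖ * ‖v‖) := by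
    nlinarith [mul_le_mul_of_nonneg_left h1 (le_of_lt hη₂),
      mul_le_mul_of_nonneg_left h2 (le_of_lt hη₁)]
  have hS : 0 ≤ ‖u‖ := norm_nonneg _
  have hT : 0 ≤ ‖v‖ := norm_nonneg _
  have goal2 : ‖v‖ * η₁ ≤ ‖u‖ * η₂ := by
    by_contra hcon
    push_neg at hcon
    have hTS : ‖u‖ < ‖v‖ := by nlinarith [mul_le_mul_of_nonneg_right hη₁₂ hT]
    nlinarith [mul_pos (sub_pos.mpr hTS)
      (show 0 < η₁ * ‖v‖ - η₂ * ‖u‖ by nlinarith)]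
  rw [← hu, ← hv, norm_smul, norm_smul]
  simp only [Real.norm_eq_abs, abs_div, abs_one, abs_of_pos hη₁, abs_of_pos hη₂]
  rw [div_mul_eq_mul_div, div_mul_eq_mul_div, one_mul, one_mul,
    div_le_div_iff₀ hη₂ hη₁]
  linarith
end

section
/- Let g: ℝ^n → ℝ ∪ {+∞} be proper, closed, convex, and nonnegative with g(x̄) = 0 for some x̄, and let C = {x : g(x) ≤ k} for some k > 0. Then for each y ∈ ℝ^n there exists λ* ≥ 0 such that prox_{λ g}(y) ∉ C for λ ∈ [0, λ*), prox_{λ g}(y) ∈ C for λ ≥ λ*, and proj_C(y) = prox_{λ* g}(y). -/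
open scoped RealInnerProductSpace

/-- Strong convexity of the prox objective: the minimizer inequality improves by
`½‖z - p‖²`. -/
lemma prox_strong_ineq {n : ℕ} (g : EuclideanSpace ℝ (Fin n) → ℝ)
    (hgconv : ConvexOn ℝ Set.univ g) (y p : EuclideanSpace ℝ (Fin n))
    (lam : ℝ) (hlam : 0 ≤ lam)
    (hmin : ∀ z, lam * g p + 1/2*‖p - y‖^2 ≤ lam * g z + 1/2*‖z - y‖^2)
    (z : EuclideanSpace ℝ (Fin n)) :
    lam * g p + 1/2*‖p - y‖^2 + 1/2*‖z - p‖^2 ≤ lam * g z + 1/2*‖z - y‖^2 := by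
  have key : ∀ t : ℝ, 0 < t → t < 1 →
      lam * g p + 1/2*‖p - y‖^2 + (1-t)*(1/2*‖z - p‖^2) ≤ lam * g z + 1/2*‖z - y‖^2 := by
    intro t ht0 ht1
    set w : EuclideanSpace ℝ (Fin n) := (1-t) • p + t • z with hw
    have hgw : g w ≤ (1-t) * g p + t * g z := by
      have := hgconv.2 (Set.mem_univ p) (Set.mem_univ z) (by linarith : (0:ℝ) ≤ 1 - t)
        (le_of_lt ht0) (by ring)
      simpa [smul_eq_mul] using this
    have hnw : ‖w - y‖^2 = (1-t)*‖p-y‖^2 + t*‖z-y‖^2 - t*(1-t)*‖z-p‖^2 := by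
      have hwy : w - y = (1-t) • (p - y) + t • (z - y) := by
        rw [hw]; module
      rw [hwy, norm_add_sq_real]
      rw [norm_smul, norm_smul, real_inner_smul_left, real_inner_smul_right]
      have h1 : ‖z - p‖^2 = ‖(z-y) - (p-y)‖^2 := by rw [show (z-y)-(p-y) = z-p by abel]
      have h2 : ‖(z-y) - (p-y)‖^2 = ‖z-y‖^2 - 2*⟪z-y, p-y⟫ + ‖p-y‖^2 :=
        norm_sub_sq_real _ _
      rw [h1, h2, real_inner_comm (z-y) (p-y)]
      rw [Real.norm_eq_abs, Real.norm_eq_abs, mul_pow, mul_pow, sq_abs, sq_abs]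
      ring
    have hm := hmin w
    nlinarith [hm, hnw, hgw, mul_le_mul_of_nonneg_left hgw hlam]
  rcases eq_or_lt_of_le (by positivity : (0:ℝ) ≤ 1/2*‖z-p‖^2) with hc | hc
  · have := key (1/2) (by norm_num) (by norm_num)
    nlinarith
  · refine le_of_forall_pos_le_add ?_
    intro ε hε
    set c := 1/2*‖z-p‖^2
    set t := min (ε / c) (1/2) with htdef
    have ht0 : 0 < t := lt_min (div_pos hε hc) (by norm_num)
    have ht1 : t < 1 := lt_of_le_of_lt (min_le_right _ _) (by norm_num)
    have htc : t * c ≤ ε := by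
      calc t * c ≤ (ε / c) * c :=
            mul_le_mul_of_nonneg_right (min_le_left _ _) (le_of_lt hc)
        _ = ε := div_mul_cancel₀ _ (ne_of_gt hc)
    have := key t ht0 ht1
    nlinarith

/-- Beck's Theorem 6.30: projection onto a sublevel set `C = {x : g(x) ≤ k}` via
the proximal operator of `λ g`: there is a threshold `λ* ≥ 0` such that
`prox_{λg}(y) ∉ C` for `λ < λ*`, `prox_{λg}(y) ∈ C` for `λ ≥ λ*`, and
`proj_C(y) = prox_{λ* g}(y)`. -/
theorem stmt11 {n : ℕ} (g : EuclideanSpace ℝ (Fin n) → ℝ)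
    (hgconv : ConvexOn ℝ Set.univ g) (hgcl : LowerSemicontinuous g)
    (hgnonneg : ∀ x, 0 ≤ g x)
    (xbar : EuclideanSpace ℝ (Fin n)) (hxbar : g xbar = 0)
    (k : ℝ) (hk : 0 < k)
    (y : EuclideanSpace ℝ (Fin n))
    (Prox : ℝ → EuclideanSpace ℝ (Fin n))
    (hProx : ∀ lam : ℝ, 0 ≤ lam → ∀ z,
      lam * g (Prox lam) + 1 / 2 * ‖Prox lam - y‖ ^ 2 ≤
        lam * g z + 1 / 2 * ‖z - y‖ ^ 2) :
    ∃ lamstar : ℝ, 0 ≤ lamstar ∧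
      (∀ lam, 0 ≤ lam → lam < lamstar → ¬ g (Prox lam) ≤ k) ∧
      (∀ lam, lamstar ≤ lam → g (Prox lam) ≤ k) ∧
      g (Prox lamstar) ≤ k ∧
      (∀ z, g z ≤ k → ‖y - Prox lamstar‖ ≤ ‖y - z‖) := by
  -- continuity of g
  have hgcont : Continuous g := by
    exact continuousOn_univ.mp (hgconv.continuousOn isOpen_univ)
  -- strong inequality
  have hstrong : ∀ lam : ℝ, 0 ≤ lam → ∀ z,
      lam * g (Prox lam) + 1/2*‖Prox lam - y‖^2 + 1/2*‖z - Prox lam‖^2 ≤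
        lam * g z + 1/2*‖z - y‖^2 := by
    intro lam hlam z
    exact prox_strong_ineq g hgconv y (Prox lam) lam hlam
      (by intro w; have := hProx lam hlam w; linarith) z
  -- path stability bound
  have hpath : ∀ a b : ℝ, 0 ≤ a → a ≤ b →
      ‖Prox b - Prox a‖^2 ≤ (b - a) * (g (Prox a) - g (Prox b)) := by
    intro a b ha hab
    have h1 := hstrong a ha (Prox b)
    have h2 := hstrong b (le_trans ha hab) (Prox a)
    have h3 : ‖Prox a - Prox b‖^2 = ‖Prox b - Prox a‖^2 := by rw [norm_sub_rev]
    linarith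
  -- monotonicity of g ∘ Prox
  have hmono : ∀ a b : ℝ, 0 ≤ a → a ≤ b → g (Prox b) ≤ g (Prox a) := by
    intro a b ha hab
    rcases eq_or_lt_of_le hab with rfl | hlt
    · exact le_rfl
    · have := hpath a b ha hab
      nlinarith [sq_nonneg ‖Prox b - Prox a‖]
  -- the set S
  set S : Set ℝ := {lam | 0 ≤ lam ∧ g (Prox lam) ≤ k} with hS
  have hM : ∀ lam : ℝ, 0 ≤ lam → lam * g (Prox lam) ≤ 1/2*‖xbar - y‖^2 := by
    intro lam hlam
    have := hProx lam hlam xbar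
    rw [hxbar] at this
    nlinarith [sq_nonneg ‖Prox lam - y‖]
  have hSne : S.Nonempty := by
    set M := 1/2*‖xbar - y‖^2 with hMdef
    have hM0 : 0 ≤ M := by positivity
    refine ⟨M/k + 1, ⟨by positivity, ?_⟩⟩
    have hl0 : (0:ℝ) < M/k + 1 := by positivity
    have := hM (M/k + 1) (le_of_lt hl0)
    have hkk : (M/k + 1) * k = M + k := by field_simp
    nlinarith [hgnonneg (Prox (M/k+1))]
  have hSbdd : BddBelow S := ⟨0, fun x hx => hx.1⟩
  set lamstar := sInf S with hls
  have hls0 : 0 ≤ lamstar := le_csInf hSne (fun x hx => hx.1)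
  -- S is upward closed
  have hup : ∀ a ∈ S, ∀ b, a ≤ b → b ∈ S := by
    intro a ha b hab
    exact ⟨le_trans ha.1 hab, le_trans (hmono a b ha.1 hab) ha.2⟩
  -- strictly above lamstar : in S
  have habove : ∀ mu, lamstar < mu → g (Prox mu) ≤ k := by
    intro mu hmu
    obtain ⟨ν, hν, hνlt⟩ := exists_lt_of_csInf_lt hSne hmu
    exact (hup ν hν mu (le_of_lt hνlt)).2
  -- g (Prox lamstar) ≤ k
  have hstar : g (Prox lamstar) ≤ k := by
    refine le_of_forall_pos_le_add ?_
    intro ε hε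
    obtain ⟨δ, hδ0, hδ⟩ := Metric.continuousAt_iff.mp (hgcont.continuousAt
      (x := Prox lamstar)) ε hε
    set G := g (Prox lamstar) with hG
    have hG0 : 0 ≤ G := hgnonneg _
    set t := δ^2 / (G + 1) with ht
    have ht0 : 0 < t := by positivity
    set mu := lamstar + t with hmu
    have hmugt : lamstar < mu := by simp [hmu]; linarith
    have hbd := hpath lamstar mu hls0 (le_of_lt hmugt)
    have hmono' : g (Prox mu) ≤ G := hmono lamstar mu hls0 (le_of_lt hmugt)
    have hnn : 0 ≤ g (Prox mu) := hgnonneg _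
    have hlt : ‖Prox mu - Prox lamstar‖^2 < δ^2 := by
      have h1 : (mu - lamstar) * (G - g (Prox mu)) ≤ t * G := by
        have : mu - lamstar = t := by simp [hmu]
        rw [this]
        nlinarith
      have h2 : t * G < δ^2 := by
        rw [ht]
        rw [div_mul_eq_mul_div, div_lt_iff₀ (by positivity : (0:ℝ) < G + 1)]
        nlinarith [sq_nonneg δ]
      linarith
    have hdist : dist (Prox mu) (Prox lamstar) < δ := by
      rw [dist_eq_norm]
      nlinarith [norm_nonneg (Prox mu - Prox lamstar)]
    have := hδ hdist
    rw [Real.dist_eq] at this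
    have h3 : g (Prox lamstar) - g (Prox mu) < ε := by
      have := abs_lt.mp this
      linarith [this.1]
    have h4 := habove mu hmugt
    linarith
  -- if lamstar > 0 then g (Prox lamstar) ≥ k
  have hactive : 0 < lamstar → k ≤ g (Prox lamstar) := by
    intro hpos
    refine le_of_forall_pos_le_add ?_
    intro ε hε
    obtain ⟨δ, hδ0, hδ⟩ := Metric.continuousAt_iff.mp (hgcont.continuousAt
      (x := Prox lamstar)) ε hε
    set G0 := g (Prox 0) with hG0
    have hGstar : g (Prox lamstar) ≤ G0 := hmono 0 lamstar le_rfl hls0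
    set t := min (δ^2 / (G0 - g (Prox lamstar) + 1)) (lamstar / 2) with ht
    have hden : 0 < G0 - g (Prox lamstar) + 1 := by linarith
    have ht0 : 0 < t := lt_min (by positivity) (by linarith)
    have htle : t ≤ lamstar / 2 := min_le_right _ _
    set lam := lamstar - t with hlam
    have hlam0 : 0 ≤ lam := by simp [hlam]; linarith
    have hlamlt : lam < lamstar := by simp [hlam]; linarith
    have hbd := hpath lam lamstar hlam0 (le_of_lt hlamlt)
    have hmonol : g (Prox lam) ≤ G0 := hmono 0 lam le_rfl hlam0
    have hlt : ‖Prox lamstar - Prox lam‖^2 < δ^2 := by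
      have h1 : (lamstar - lam) * (g (Prox lam) - g (Prox lamstar)) ≤
          t * (G0 - g (Prox lamstar)) := by
        have he : lamstar - lam = t := by simp [hlam]
        rw [he]
        have : g (Prox lamstar) ≤ g (Prox lam) := hmono lam lamstar hlam0 (le_of_lt hlamlt)
        nlinarith
      have h2 : t * (G0 - g (Prox lamstar)) < δ^2 := by
        have hm := min_le_left (δ^2 / (G0 - g (Prox lamstar) + 1)) (lamstar / 2)
        rw [← ht] at hm
        have : t * (G0 - g (Prox lamstar) + 1) ≤ δ^2 := by
          calc t * (G0 - g (Prox lamstar) + 1)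
              ≤ (δ^2 / (G0 - g (Prox lamstar) + 1)) * (G0 - g (Prox lamstar) + 1) :=
                mul_le_mul_of_nonneg_right hm (le_of_lt hden)
            _ = δ^2 := div_mul_cancel₀ _ (ne_of_gt hden)
        nlinarith
      linarith
    have hdist : dist (Prox lam) (Prox lamstar) < δ := by
      rw [dist_eq_norm, ← norm_sub_rev]
      nlinarith [norm_nonneg (Prox lamstar - Prox lam)]
    have := hδ hdist
    rw [Real.dist_eq] at this
    have h3 : g (Prox lam) - g (Prox lamstar) < ε := by
      have := abs_lt.mp this
      linarith [this.2]
    -- lam < lamstar ⇒ lam ∉ S ⇒ g (Prox lam) > k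
    have hnotin : ¬ g (Prox lam) ≤ k := by
      intro hcon
      have : lam ∈ S := ⟨hlam0, hcon⟩
      have := csInf_le hSbdd this
      rw [← hls] at this
      linarith
    push_neg at hnotin
    linarith
  refine ⟨lamstar, hls0, ?_, ?_, hstar, ?_⟩
  · intro lam hlam0 hlamlt hcon
    have : lam ∈ S := ⟨hlam0, hcon⟩
    have := csInf_le hSbdd this
    rw [← hls] at this
    linarith
  · intro lam hlam
    rcases eq_or_lt_of_le hlam with rfl | hlt
    · exact hstar
    · exact habove lam hlt
  · intro z hz
    rcases eq_or_lt_of_le hls0 with hzero | hpos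
    · have hl : lamstar = 0 := hzero.symm
      have := hProx lamstar hls0 z
      simp only [hl, zero_mul, zero_add] at this ⊢
      rw [norm_sub_rev y (Prox 0), norm_sub_rev y z]
      nlinarith [norm_nonneg (Prox 0 - y), norm_nonneg (z - y)]
    · have hkle := hactive hpos
      have h1 := hProx lamstar hls0 z
      have h2 : lamstar * g z ≤ lamstar * k :=
        mul_le_mul_of_nonneg_left hz (le_of_lt hpos)
      have h3 : lamstar * k ≤ lamstar * g (Prox lamstar) :=
        mul_le_mul_of_nonneg_left hkle (le_of_lt hpos)
      rw [norm_sub_rev y (Prox lamstar), norm_sub_rev y z]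
      nlinarith [norm_nonneg (Prox lamstar - y), norm_nonneg (z - y)]
end

section
/- Let g₁(α) = ‖α - α^init‖_p^p with p ≥ 1, and g₂ the indicator function of the box [l,u] ⊆ ℝ^n, and g = g₁ + g₂. Then for all α ∈ ℝ^n and λ > 0, prox_{λg}(α) = proj_{[l,u]}(prox_{λg₁}(α)). -/
open Finset

private lemma fconv (lam a b p : ℝ) (hlam : 0 ≤ lam) (hp : 1 ≤ p) :
    ConvexOn ℝ Set.univ (fun t : ℝ => lam * |t - a| ^ p + 1 / 2 * (t - b) ^ 2) := by
  have habs : ConvexOn ℝ Set.univ (fun t : ℝ => |t - a| ^ p) := by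
    refine ⟨convex_univ, ?_⟩
    intro x _ y _ c d hc hd hcd
    have hp0 : 0 ≤ p := le_trans zero_le_one hp
    simp only [smul_eq_mul]
    have h1 : |c * x + d * y - a| ≤ c * |x - a| + d * |y - a| := by
      calc |c * x + d * y - a| = |c * (x - a) + d * (y - a)| := by
            rw [show c * x + d * y - a = c * (x - a) + d * (y - a) by linear_combination a * hcd]
        _ ≤ |c * (x - a)| + |d * (y - a)| := abs_add_le _ _
        _ = c * |x - a| + d * |y - a| := by
            rw [abs_mul, abs_mul, abs_of_nonneg hc, abs_of_nonneg hd]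
    have h2 : |c * x + d * y - a| ^ p ≤ (c * |x - a| + d * |y - a|) ^ p :=
      Real.rpow_le_rpow (abs_nonneg _) h1 hp0
    have h3 := (convexOn_rpow hp).2 (Set.mem_Ici.2 (abs_nonneg (x - a)))
      (Set.mem_Ici.2 (abs_nonneg (y - a))) hc hd hcd
    simp only [smul_eq_mul] at h3
    exact h2.trans h3
  have hsq : ConvexOn ℝ Set.univ (fun t : ℝ => (t - b) ^ 2) := by
    refine ⟨convex_univ, ?_⟩
    intro x _ y _ c d hc hd hcd
    simp only [smul_eq_mul]
    have hd1 : d = 1 - c := by linarith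
    subst hd1
    nlinarith [mul_nonneg (mul_nonneg hc hd) (sq_nonneg (x - y))]
  exact (habs.smul hlam).add (hsq.smul (by norm_num))

/-- Prox decomposition: for `g = g₁ + (indicator of the box [l,u])` with
`g₁(α) = ‖α - α^init‖_p^p` (`p ≥ 1`),
`prox_{λg}(α) = proj_{[l,u]}(prox_{λg₁}(α))`; i.e., clamping the prox of `λg₁`
to the box yields the minimizer of `β ↦ λ g₁(β) + ½‖β - α‖²` over the box. -/
theorem stmt12 {n : ℕ} (p : ℝ) (hp : 1 ≤ p)
    (αinit l u : Fin n → ℝ)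
    (hlu : ∀ i, l i ≤ αinit i ∧ αinit i ≤ u i)
    (α : Fin n → ℝ) (lam : ℝ) (hlam : 0 < lam)
    (q : Fin n → ℝ)
    (hq : ∀ β : Fin n → ℝ,
      lam * ∑ i, |q i - αinit i| ^ p + 1 / 2 * ∑ i, (q i - α i) ^ 2 ≤
        lam * ∑ i, |β i - αinit i| ^ p + 1 / 2 * ∑ i, (β i - α i) ^ 2) :
    (∀ i, l i ≤ max (l i) (min (u i) (q i)) ∧ max (l i) (min (u i) (q i)) ≤ u i) ∧
    (∀ β : Fin n → ℝ, (∀ i, l i ≤ β i ∧ β i ≤ u i) →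
      lam * ∑ i, |max (l i) (min (u i) (q i)) - αinit i| ^ p +
          1 / 2 * ∑ i, (max (l i) (min (u i) (q i)) - α i) ^ 2 ≤
        lam * ∑ i, |β i - αinit i| ^ p + 1 / 2 * ∑ i, (β i - α i) ^ 2) := by
  set f : Fin n → ℝ → ℝ := fun i t => lam * |t - αinit i| ^ p + 1 / 2 * (t - α i) ^ 2 with hf
  set m : Fin n → ℝ := fun i => max (l i) (min (u i) (q i)) with hm
  -- each coordinate of q minimizes f i globally
  have hmin : ∀ i t, f i (q i) ≤ f i t := by
    intro i t
    have h := hq (Function.update q i t)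
    have e1 : ∀ (c : Fin n → ℝ), (fun j => |Function.update q i t j - c j| ^ p)
        = Function.update (fun j => |q j - c j| ^ p) i (|t - c i| ^ p) := by
      intro c; funext j
      rcases eq_or_ne j i with rfl | hji
      · simp
      · simp [Function.update_of_ne hji]
    have e2 : ∀ (c : Fin n → ℝ), (fun j => (Function.update q i t j - c j) ^ 2)
        = Function.update (fun j => (q j - c j) ^ 2) i ((t - c i) ^ 2) := by
      intro c; funext j
      rcases eq_or_ne j i with rfl | hji
      · simp
      · simp [Function.update_of_ne hji]
    rw [show (∑ j, |Function.update q i t j - αinit j| ^ p)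
        = ∑ j, Function.update (fun j => |q j - αinit j| ^ p) i (|t - αinit i| ^ p) j by
          rw [← e1],
      show (∑ j, (Function.update q i t j - α j) ^ 2)
        = ∑ j, Function.update (fun j => (q j - α j) ^ 2) i ((t - α i) ^ 2) j by
          rw [← e2],
      Finset.sum_update_of_mem (Finset.mem_univ i),
      Finset.sum_update_of_mem (Finset.mem_univ i)] at h
    rw [show (∑ j, |q j - αinit j| ^ p)
        = |q i - αinit i| ^ p + ∑ j ∈ univ \ {i}, |q j - αinit j| ^ p by
          rw [Finset.sum_eq_sum_sdiff_singleton_add (Finset.mem_univ i)]; ring,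
      show (∑ j, (q j - α j) ^ 2)
        = (q i - α i) ^ 2 + ∑ j ∈ univ \ {i}, (q j - α j) ^ 2 by
          rw [Finset.sum_eq_sum_sdiff_singleton_add (Finset.mem_univ i)]; ring] at h
    simp only [hf, mul_add] at h ⊢
    linarith
  have hbox : ∀ i, l i ≤ m i ∧ m i ≤ u i := fun i =>
    ⟨le_max_left _ _, max_le (le_trans (hlu i).1 (hlu i).2) (min_le_left _ _)⟩
  refine ⟨hbox, fun β hβ => ?_⟩
  -- per-coordinate optimality of the clamp over the box
  have key : ∀ i, f i (m i) ≤ f i (β i) := by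
    intro i
    have hseg : m i ∈ Set.Icc (min (q i) (β i)) (max (q i) (β i)) := by
      constructor
      · exact le_max_of_le_right
          (le_min ((min_le_right _ _).trans (hβ i).2) (min_le_left _ _))
      · exact max_le ((hβ i).1.trans (le_max_right _ _))
          ((min_le_right _ _).trans (le_max_left _ _))
    have hseg' : m i ∈ segment ℝ (q i) (β i) := by
      rw [segment_eq_Icc']; exact hseg
    have h := (fconv lam (αinit i) (α i) p hlam.le hp).le_on_segment
      (Set.mem_univ (q i)) (Set.mem_univ (β i)) hseg'
    calc f i (m i) ≤ max (f i (q i)) (f i (β i)) := h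
      _ = f i (β i) := max_eq_right (hmin i (β i))
  calc lam * ∑ i, |m i - αinit i| ^ p + 1 / 2 * ∑ i, (m i - α i) ^ 2
      = ∑ i, f i (m i) := by
        simp only [hf, Finset.mul_sum, Finset.sum_add_distrib]
    _ ≤ ∑ i, f i (β i) := Finset.sum_le_sum fun i _ => key i
    _ = lam * ∑ i, |β i - αinit i| ^ p + 1 / 2 * ∑ i, (β i - α i) ^ 2 := by
        simp only [hf, Finset.mul_sum, Finset.sum_add_distrib]
end
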